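/- Let P = f_{i_1}^{k_1} ⋯ f_{i_t}^{k_t}(P_0) be a top MV polytope, where k_1 > k_2 > ⋯ > k_t > 0, the indices i_j ∈ ℤ/2ℤ satisfy i_{j+1} = i_j + 1 with i_1 = 1, and P_0 is the trivial MV polytope. Then the right datum of P has a_1 = k_1, and for every integer K with 1 ≤ K ≤ k_1, the MV polytope e_1^K(P) (the unique MV polytope whose right datum equals that of P with a_1 replaced by k_1 − K) has ā_1 < K in its left datum. -/

import Mathlib

/-!
Along the chain, the side just acted on is `(a_1 = k, λ = ∅, upper sequence S)` and the other side
is `(0, ∅, C)`, where `C` interlaces `S` (condition (ii)) and `deg S + deg C = k`. The step rests on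
the fact that a sequence interlacing a fixed one is determined by its total weight (an Abel
summation argument): if the other side had a nonzero lower part or a nonempty partition, the weight
equations would force its upper sequence to be the previous companion `W` of `S`, and then
`deg W + deg S` would reach the new exponent, which is too large since the `k_j` decrease
strictly. The same computation for `e_1^K(P)` gives `ā_1 = 0` or
`deg ā + (k_1 − K) = deg W + deg S < k_1`.
-/

namespace MVPaper

/-- The lattice `L = ℤα₀ ⊕ ℤα₁`, a vector `(x, y)` standing for `xα₀ + yα₁`;
`(v, ω₀) = x` is the first coordinate and `(v, ω₁) = y` the second. -/
abbrev LatL := ℤ × ℤ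

def alpha0 : LatL := (1, 0)
def alpha1 : LatL := (0, 1)
def deltaL : LatL := (1, 1)

/-- A Lusztig datum: a finitely supported sequence `(a_k)_{k≥1}` (here `a k = a_{k+1}`),
a partition `lam` (a multiset of positive integers), and a finitely supported sequence
`(a^k)_{k≥1}` (here `A k = a^{k+1}`). -/
structure LusztigDatum where
  a : ℕ →₀ ℕ
  lam : Multiset ℕ
  A : ℕ →₀ ℕ
  lam_pos : ∀ x ∈ lam, 0 < x

namespace LusztigDatum

/-- The lower vertex `μ_k = ∑_{j=1}^k a_j (sroot + (j−1)δ)`. -/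
def muLow (d : LusztigDatum) (sroot : LatL) (k : ℕ) : LatL :=
  ∑ j ∈ Finset.range k, (d.a j) • (sroot + j • deltaL)

/-- The vertex `μ_∞`. -/
def muInf (d : LusztigDatum) (sroot : LatL) : LatL :=
  d.a.sum fun j m => m • (sroot + j • deltaL)

/-- The vertex `μ^∞ = μ_∞ + |λ|δ`. -/
def muTopInf (d : LusztigDatum) (sroot : LatL) : LatL :=
  d.muInf sroot + (d.lam.sum) • deltaL

/-- The upper vertex `μ^k = μ^∞ + ∑_{j>k} a^j (oroot + (j−1)δ)`. -/
def muHigh (d : LusztigDatum) (sroot oroot : LatL) (k : ℕ) : LatL :=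
  d.muTopInf sroot + ∑ j ∈ d.A.support.filter (fun j => k ≤ j), (d.A j) • (oroot + j • deltaL)

end LusztigDatum

/-- An affine `sl₂` MV polytope: a pair of Lusztig data (right datum `R`, left datum `L`)
of the same weight, satisfying the conditions (i)–(iv) of
Baumann–Dunlap–Kamnitzer–Tingley. -/
structure MVPolytope where
  R : LusztigDatum
  L : LusztigDatum
  closing : R.muHigh alpha1 alpha0 0 = L.muHigh alpha0 alpha1 0
  cond_low : ∀ k : ℕ, 2 ≤ k →
    (L.muLow alpha0 k - R.muLow alpha1 (k - 1)).2 ≤ 0 ∧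
    (R.muLow alpha1 k - L.muLow alpha0 (k - 1)).1 ≤ 0 ∧
    ((L.muLow alpha0 k - R.muLow alpha1 (k - 1)).2 = 0 ∨
      (R.muLow alpha1 k - L.muLow alpha0 (k - 1)).1 = 0)
  cond_high : ∀ k : ℕ, 2 ≤ k →
    0 ≤ (L.muHigh alpha0 alpha1 k - R.muHigh alpha1 alpha0 (k - 1)).1 ∧
    0 ≤ (R.muHigh alpha1 alpha0 k - L.muHigh alpha0 alpha1 (k - 1)).2 ∧
    ((L.muHigh alpha0 alpha1 k - R.muHigh alpha1 alpha0 (k - 1)).1 = 0 ∨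
      (R.muHigh alpha1 alpha0 k - L.muHigh alpha0 alpha1 (k - 1)).2 = 0)
  cond_parts :
    (if (R.muInf alpha1 - L.muInf alpha0).1 * (R.muTopInf alpha1 - L.muTopInf alpha0).2
        = (R.muInf alpha1 - L.muInf alpha0).2 * (R.muTopInf alpha1 - L.muTopInf alpha0).1
     then R.lam = L.lam
     else ∃ n : ℕ,
        (n : ℤ) = (R.muInf alpha1 - L.muInf alpha0).2 - (R.muInf alpha1 - L.muInf alpha0).1 ∧
        (R.lam = n ::ₘ L.lam ∨ L.lam = n ::ₘ R.lam))
  cond_size : ∀ x : ℕ, (x ∈ R.lam ∨ x ∈ L.lam) →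
    (x : ℤ) ≤ (R.muInf alpha1 - L.muInf alpha0).2 - (R.muInf alpha1 - L.muInf alpha0).1

/-- `MVf i n P Q` says `Q = f_i^n(P)`: for `i = 1` the right datum of `Q` is that of `P`
with `a_1` increased by `n`; for `i = 0` the left datum of `Q` is that of `P` with `ā_1`
increased by `n` (the other datum is then determined, by BDKT Theorem 3.11). -/
def MVf (i : ZMod 2) (n : ℕ) (P Q : MVPolytope) : Prop :=
  if i = 1 then
    Q.R.a = P.R.a + Finsupp.single 0 n ∧ Q.R.lam = P.R.lam ∧ Q.R.A = P.R.A
  else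
    Q.L.a = P.L.a + Finsupp.single 0 n ∧ Q.L.lam = P.L.lam ∧ Q.L.A = P.L.A

/-- The trivial (highest weight) MV polytope: all data vanish. -/
def IsTrivialMV (P : MVPolytope) : Prop :=
  P.R.a = 0 ∧ P.R.lam = 0 ∧ P.R.A = 0 ∧ P.L.a = 0 ∧ P.L.lam = 0 ∧ P.L.A = 0

/-- A top polytope: `λ = λ̄ = ∅` and `a_k = ā_k = 0` for all `k ≥ 2`. -/
def IsTopMV (P : MVPolytope) : Prop :=
  P.R.lam = 0 ∧ P.L.lam = 0 ∧ (∀ k, 1 ≤ k → P.R.a k = 0) ∧ (∀ k, 1 ≤ k → P.L.a k = 0)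

/-- A δ-top polytope: `a_k = ā_k = 0` for all `k ≥ 2`. -/
def IsDeltaTopMV (P : MVPolytope) : Prop :=
  (∀ k, 1 ≤ k → P.R.a k = 0) ∧ (∀ k, 1 ≤ k → P.L.a k = 0)

/-- `P = f_{i_0}^{k_0} ⋯ f_{i_{t-1}}^{k_{t-1}}(P₀)` with `P₀` the trivial MV polytope:
a chain `Q t = P₀, …, Q 0 = P` with `Q j = f_{i_j}^{k_j}(Q (j+1))`. -/
def FWordChain (t : ℕ) (k : ℕ → ℕ) (i : ℕ → ZMod 2) (P : MVPolytope) : Prop :=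
  ∃ Q : ℕ → MVPolytope, IsTrivialMV (Q t) ∧ Q 0 = P ∧
    ∀ j, j < t → MVf (i j) (k j) (Q (j + 1)) (Q j)

open Finset Filter Finsupp

def partialMoment (f : ℕ →₀ ℕ) (k : ℕ) : ℕ := ∑ j ∈ range k, j * f j

def partialMomentSucc (f : ℕ →₀ ℕ) (k : ℕ) : ℕ := ∑ j ∈ range k, (j + 1) * f j

def moment (f : ℕ →₀ ℕ) : ℕ := f.sum fun j m => j * m

def momentSucc (f : ℕ →₀ ℕ) : ℕ := f.sum fun j m => (j + 1) * m

lemma momentSucc_eq (f : ℕ →₀ ℕ) : momentSucc f = moment f + degree f := by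
  simp only [momentSucc, moment, degree_apply, Finsupp.sum, ← sum_add_distrib, add_one_mul]

lemma eq_zero_of_momentSucc_eq_zero {f : ℕ →₀ ℕ} (h : momentSucc f = 0) : f = 0 :=
  (degree_eq_zero_iff f).1 (by rw [momentSucc_eq] at h; omega)

@[simp] lemma moment_zero : moment 0 = 0 := by
  simp [moment]

@[simp] lemma momentSucc_zero : momentSucc 0 = 0 := by
  simp [momentSucc]

@[simp] lemma moment_single_zero (a : ℕ) : moment (single 0 a) = 0 := by
  simp [moment]

@[simp] lemma momentSucc_single_zero (a : ℕ) : momentSucc (single 0 a) = a := by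
  simp [momentSucc]

lemma eventually_partialMoment_eq (f : ℕ →₀ ℕ) : ∀ᶠ k in atTop,
    partialMoment f (k + 1) = moment f ∧ partialMomentSucc f k = momentSucc f := by
  obtain ⟨n, hn⟩ := f.support.exists_nat_subset_range
  filter_upwards [eventually_ge_atTop n] with k hk
  have hsub := hn.trans (range_subset_range.2 hk)
  exact ⟨(sum_of_support_subset f (hsub.trans (range_subset_range.2 k.le_succ)) _
    fun _ _ => mul_zero _).symm, (sum_of_support_subset f hsub _ fun _ _ => mul_zero _).symm⟩

/-- Conditions (i) and (ii) in coordinates: `Interlace ā a` at `k` is condition (i) at `k + 1`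
(at `k = 0` it holds trivially), and `Interlace Ā A` is condition (ii) by `muHigh_eq_sub`. -/
def Interlace (f g : ℕ →₀ ℕ) : Prop :=
  ∀ k, partialMoment f (k + 1) ≤ partialMomentSucc g k ∧
    partialMoment g (k + 1) ≤ partialMomentSucc f k ∧
    (partialMoment f (k + 1) = partialMomentSucc g k ∨
      partialMoment g (k + 1) = partialMomentSucc f k)

lemma Interlace.symm {f g : ℕ →₀ ℕ} (h : Interlace f g) : Interlace g f :=
  fun k => ⟨(h k).2.1, (h k).1, (h k).2.2.symm⟩

lemma Interlace.moment_le_momentSucc {f g : ℕ →₀ ℕ} (h : Interlace f g) :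
    moment g ≤ momentSucc f := by
  obtain ⟨k, ⟨-, hf⟩, hg, -⟩ :=
    ((eventually_partialMoment_eq f).and (eventually_partialMoment_eq g)).exists
  rw [← hf, ← hg]
  exact (h k).2.1

lemma Interlace.eq_zero_or_moment_eq {f : ℕ →₀ ℕ} {a : ℕ} (h : Interlace f (single 0 a)) :
    f = 0 ∨ moment f = a := by
  obtain ⟨k, ⟨hf, hf'⟩, ha, ha'⟩ :=
    ((eventually_partialMoment_eq f).and (eventually_partialMoment_eq (single 0 a))).exists
  rcases (h k).2.2 with h' | h'
  · right
    rwa [hf, ha', momentSucc_single_zero] at h'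
  · left
    rw [ha, hf', moment_single_zero] at h'
    exact eq_zero_of_momentSucc_eq_zero h'.symm

/-- Abel summation against the decreasing weights `(i + 1) / i`; `key` is that summation with
denominators cleared. -/
lemma sum_range_succ_mul_pos {Z : ℕ → ℤ} {r n : ℕ} (hzero : ∀ j < r, Z j = 0) (hpos : 0 < Z r)
    (hrn : r < n) (hQ : ∀ j, r < j → j < n → 0 ≤ ∑ i ∈ range (j + 1), (i : ℤ) * Z i) :
    0 < ∑ i ∈ range n, ((i : ℤ) + 1) * Z i := by
  set E := fun m => ∑ i ∈ range m, ((i : ℤ) + 1) * Z i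
  set Q := fun m => ∑ i ∈ range m, (i : ℤ) * Z i
  have hE : ∀ m, E (m + 1) = E m + (m + 1) * Z m := fun m => sum_range_succ _ m
  have hQ' : ∀ m, Q (m + 1) = Q m + m * Z m := fun m => sum_range_succ _ m
  have hEr : E r = 0 := sum_eq_zero fun j hj => by rw [hzero j (mem_range.1 hj), mul_zero]
  have hQr : Q r = 0 := sum_eq_zero fun j hj => by rw [hzero j (mem_range.1 hj), mul_zero]
  have key : ∀ m, r ≤ m → m < n →
      0 ≤ m * E (m + 1) - (m + 1) * Q (m + 1) ∧ 0 < E (m + 1) - Q (m + 1) := by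
    intro m hm
    induction m, hm using Nat.le_induction with
    | base =>
      intro _
      rw [hE, hQ', hEr, hQr]
      constructor <;> nlinarith
    | succ m hm ih =>
      intro hmn
      obtain ⟨hF, hS⟩ := ih (by omega)
      have hQm : 0 ≤ Q (m + 1 + 1) := hQ (m + 1) (by omega) hmn
      have hF' : (m + 1 : ℤ) * E (m + 1 + 1) - (m + 1 + 1) * Q (m + 1 + 1)
          = m * E (m + 1) - (m + 1) * Q (m + 1) + (E (m + 1) - Q (m + 1)) := by
        rw [hE (m + 1), hQ' (m + 1)]; push_cast; ring
      have hS' : (m + 1 : ℤ) * (E (m + 1 + 1) - Q (m + 1 + 1))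
          = (m + 1) * E (m + 1 + 1) - (m + 1 + 1) * Q (m + 1 + 1) + Q (m + 1 + 1) := by ring
      push_cast
      refine ⟨by linarith, pos_of_mul_pos_right (a := (m + 1 : ℤ)) ?_ (by positivity)⟩
      linarith
  obtain ⟨m, rfl⟩ : ∃ m, n = m + 1 := ⟨n - 1, by omega⟩
  have hQn : 0 ≤ Q (m + 1) := by
    rcases (show r = m ∨ r < m by omega) with rfl | hrm
    · rw [hQ', hQr]; positivity
    · exact hQ m hrm (by omega)
  linarith [(key m (by omega) (by omega)).2]

lemma Interlace.apply_le_of_forall_lt_eq {X Y T : ℕ →₀ ℕ} (hX : Interlace X T)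
    (hY : Interlace Y T) (h : momentSucc X = momentSucc Y) {r : ℕ}
    (hbelow : ∀ j < r, X j = Y j) : X r ≤ Y r := by
  by_contra! hlt
  set Z : ℕ → ℤ := fun j => (X j : ℤ) - Y j
  have hE : ∀ n, (partialMomentSucc X n : ℤ) - partialMomentSucc Y n
      = ∑ i ∈ range n, ((i : ℤ) + 1) * Z i := by
    intro n
    simp only [partialMomentSucc, Z, mul_sub, sum_sub_distrib]
    push_cast; rfl
  have hQ : ∀ n, (partialMoment X n : ℤ) - partialMoment Y n = ∑ i ∈ range n, (i : ℤ) * Z i := by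
    intro n
    simp only [partialMoment, Z, mul_sub, sum_sub_distrib]
    push_cast; rfl
  -- Where the gap `partialMomentSucc X j - partialMoment T (j + 1)` is open, the other gap of `X`
  -- is closed, which makes the partial moments of `Z` nonnegative.
  have hpos : ∀ n, r < n → 0 < ∑ i ∈ range n, ((i : ℤ) + 1) * Z i := by
    intro n
    induction n using Nat.strong_induction_on with
    | _ n ih =>
      intro hrn
      refine sum_range_succ_mul_pos (fun j hj => by simp [Z, hbelow j hj]) (by simp [Z, hlt])
        hrn fun j hrj hjn => ?_
      have hgap := ih j hjn hrj
      rw [← hE] at hgap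
      obtain ⟨-, hX2, hXeq⟩ := hX j
      obtain ⟨hY1, hY2, -⟩ := hY j
      have hclosed : partialMoment X (j + 1) = partialMomentSucc T j :=
        hXeq.resolve_right (by omega)
      rw [← hQ]
      omega
  obtain ⟨N, ⟨⟨-, hXN⟩, -, hYN⟩, hrN⟩ := (((eventually_partialMoment_eq X).and
    (eventually_partialMoment_eq Y)).and (eventually_gt_atTop r)).exists
  have := hpos N hrN
  rw [← hE, hXN, hYN, h, sub_self] at this
  exact this.false

theorem Interlace.eq_of_momentSucc_eq {X Y T : ℕ →₀ ℕ} (hX : Interlace X T)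
    (hY : Interlace Y T) (h : momentSucc X = momentSucc Y) : X = Y := by
  by_contra hne
  have hex : ∃ r, X r ≠ Y r := by
    contrapose! hne
    exact Finsupp.ext hne
  have hbelow : ∀ j < Nat.find hex, X j = Y j := fun j hj => not_not.1 (Nat.find_min hex hj)
  exact Nat.find_spec hex (le_antisymm (hX.apply_le_of_forall_lt_eq hY h hbelow)
    (hY.apply_le_of_forall_lt_eq hX h.symm fun j hj => (hbelow j hj).symm))

lemma sum_smul_alpha1 (s : Finset ℕ) (f : ℕ → ℕ) :
    ∑ j ∈ s, f j • (alpha1 + j • deltaL)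
      = (((∑ j ∈ s, j * f j : ℕ) : ℤ), ((∑ j ∈ s, (j + 1) * f j : ℕ) : ℤ)) := by
  ext <;> simp [Prod.fst_sum, Prod.snd_sum, alpha1, deltaL, mul_comm, add_comm]

lemma sum_smul_alpha0 (s : Finset ℕ) (f : ℕ → ℕ) :
    ∑ j ∈ s, f j • (alpha0 + j • deltaL)
      = (((∑ j ∈ s, (j + 1) * f j : ℕ) : ℤ), ((∑ j ∈ s, j * f j : ℕ) : ℤ)) := by
  ext <;> simp [Prod.fst_sum, Prod.snd_sum, alpha0, deltaL, mul_comm, add_comm]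

namespace LusztigDatum

lemma muLow_alpha1 (d : LusztigDatum) (k : ℕ) :
    d.muLow alpha1 k = ((partialMoment d.a k : ℤ), (partialMomentSucc d.a k : ℤ)) :=
  sum_smul_alpha1 _ _

lemma muLow_alpha0 (d : LusztigDatum) (k : ℕ) :
    d.muLow alpha0 k = ((partialMomentSucc d.a k : ℤ), (partialMoment d.a k : ℤ)) :=
  sum_smul_alpha0 _ _

lemma muInf_alpha1 (d : LusztigDatum) :
    d.muInf alpha1 = ((moment d.a : ℤ), (momentSucc d.a : ℤ)) :=
  sum_smul_alpha1 _ _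

lemma muInf_alpha0 (d : LusztigDatum) :
    d.muInf alpha0 = ((momentSucc d.a : ℤ), (moment d.a : ℤ)) :=
  sum_smul_alpha0 _ _

lemma muHigh_eq_sub (d : LusztigDatum) (s o : LatL) (k : ℕ) :
    d.muHigh s o k = d.muHigh s o 0 - ∑ j ∈ range k, d.A j • (o + j • deltaL) := by
  rw [eq_sub_iff_add_eq, muHigh, muHigh, add_assoc, filter_true_of_mem fun _ _ => Nat.zero_le _]
  congr 1
  rw [← sum_filter_add_sum_filter_not d.A.support (k ≤ ·)]
  congr 1
  refine (sum_subset (fun j hj => mem_range.2 (not_le.1 (mem_filter.1 hj).2))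
    fun j hj hj' => ?_).symm
  rw [notMem_support_iff.1 fun hs => hj' (mem_filter.2 ⟨hs, not_le.2 (mem_range.1 hj)⟩),
    zero_smul]

lemma muHigh_zero_alpha1 (d : LusztigDatum) :
    d.muHigh alpha1 alpha0 0 = ((moment d.a : ℤ) + d.lam.sum + momentSucc d.A,
      (momentSucc d.a : ℤ) + d.lam.sum + moment d.A) := by
  rw [muHigh, filter_true_of_mem fun _ _ => Nat.zero_le _, sum_smul_alpha0, muTopInf, muInf_alpha1]
  ext <;> simp [deltaL, moment, momentSucc, Finsupp.sum]

lemma muHigh_zero_alpha0 (d : LusztigDatum) :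
    d.muHigh alpha0 alpha1 0 = ((momentSucc d.a : ℤ) + d.lam.sum + moment d.A,
      (moment d.a : ℤ) + d.lam.sum + momentSucc d.A) := by
  rw [muHigh, filter_true_of_mem fun _ _ => Nat.zero_le _, sum_smul_alpha1, muTopInf, muInf_alpha0]
  ext <;> simp [deltaL, moment, momentSucc, Finsupp.sum]

lemma lam_eq_zero_of_sum_eq_zero (d : LusztigDatum) (h : d.lam.sum = 0) : d.lam = 0 :=
  Multiset.eq_zero_of_forall_notMem fun x hx =>
    (d.lam_pos x hx).ne' (Multiset.sum_eq_zero_iff.1 h x hx)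

end LusztigDatum

lemma interlace_of_two_le {f g : ℕ →₀ ℕ}
    (h : ∀ k, 2 ≤ k → (partialMoment f k : ℤ) ≤ partialMomentSucc g (k - 1) ∧
      (partialMoment g k : ℤ) ≤ partialMomentSucc f (k - 1) ∧
      ((partialMoment f k : ℤ) = partialMomentSucc g (k - 1) ∨
        (partialMoment g k : ℤ) = partialMomentSucc f (k - 1))) : Interlace f g := by
  rintro (_ | m)
  · simp [partialMoment, partialMomentSucc]
  · simpa only [Nat.add_sub_cancel, Nat.cast_le, Nat.cast_inj] using h (m + 1 + 1) (by omega)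

/-- The numerical content of conditions (i)–(iv) for a right datum `R` and a left datum `L`;
unlike `MVPolytope`, it is symmetric under exchanging the two data. -/
structure MVConstraints (R L : LusztigDatum) : Prop where
  low : Interlace L.a R.a
  high : Interlace L.A R.A
  weight_fst :
    moment R.a + R.lam.sum + momentSucc R.A = momentSucc L.a + L.lam.sum + moment L.A
  weight_snd :
    momentSucc R.a + R.lam.sum + moment R.A = moment L.a + L.lam.sum + momentSucc L.A
  lam_cons : R.lam.sum ≠ L.lam.sum → degree R.a + degree L.a ≠ 0 →
    R.lam = (degree R.a + degree L.a) ::ₘ L.lam ∨ L.lam = (degree R.a + degree L.a) ::ₘ R.lam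

lemma MVConstraints.symm {R L : LusztigDatum} (h : MVConstraints R L) : MVConstraints L R where
  low := h.low.symm
  high := h.high.symm
  weight_fst := h.weight_snd.symm
  weight_snd := h.weight_fst.symm
  lam_cons hne hdeg := by
    rw [add_comm]
    exact (h.lam_cons hne.symm (by rwa [add_comm])).symm

namespace MVPolytope

variable (X : MVPolytope)

lemma interlace_low : Interlace X.L.a X.R.a :=
  interlace_of_two_le fun k hk => by
    simpa only [LusztigDatum.muLow_alpha0, LusztigDatum.muLow_alpha1, Prod.mk_sub_mk,
      sub_nonpos, sub_eq_zero] using X.cond_low k hk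

lemma interlace_high : Interlace X.L.A X.R.A := by
  have hdiff : ∀ k l, X.L.muHigh alpha0 alpha1 k - X.R.muHigh alpha1 alpha0 l
      = ((partialMomentSucc X.R.A l : ℤ) - partialMoment X.L.A k,
        (partialMoment X.R.A l : ℤ) - partialMomentSucc X.L.A k) := by
    intro k l
    rw [LusztigDatum.muHigh_eq_sub X.L _ _ k, LusztigDatum.muHigh_eq_sub X.R _ _ l, X.closing,
      sum_smul_alpha0, sum_smul_alpha1, sub_sub_sub_cancel_left, Prod.mk_sub_mk]
    rfl
  refine interlace_of_two_le fun k hk => ?_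
  have h := X.cond_high k hk
  rw [hdiff k (k - 1), ← neg_sub (X.L.muHigh _ _ (k - 1)), hdiff] at h
  simp only [Prod.neg_mk, neg_sub, sub_nonneg, sub_eq_zero] at h
  exact ⟨h.1, h.2.1, h.2.2.imp Eq.symm Eq.symm⟩

lemma weight_eq :
    (moment X.R.a + X.R.lam.sum + momentSucc X.R.A
      = momentSucc X.L.a + X.L.lam.sum + moment X.L.A) ∧
    (momentSucc X.R.a + X.R.lam.sum + moment X.R.A
      = moment X.L.a + X.L.lam.sum + momentSucc X.L.A) := by
  have h := X.closing
  rw [LusztigDatum.muHigh_zero_alpha1, LusztigDatum.muHigh_zero_alpha0, Prod.mk.injEq] at h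
  exact_mod_cast h

/-- Here `(μ_∞ − μ̄_∞, α₁)/2` is the number `degree R.a + degree L.a` of lower root vectors, and
`μ^∞ − μ̄^∞` differs from `μ_∞ − μ̄_∞` by `(|λ| − |λ̄|)δ`, so proportionality fails exactly when
both are nonzero. -/
lemma lam_cons (hne : X.R.lam.sum ≠ X.L.lam.sum) (hdeg : degree X.R.a + degree X.L.a ≠ 0) :
    X.R.lam = (degree X.R.a + degree X.L.a) ::ₘ X.L.lam ∨
      X.L.lam = (degree X.R.a + degree X.L.a) ::ₘ X.R.lam := by
  have hp := X.cond_parts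
  simp only [LusztigDatum.muTopInf, LusztigDatum.muInf_alpha1, LusztigDatum.muInf_alpha0,
    deltaL, Prod.smul_mk, nsmul_eq_mul, mul_one, Prod.mk_add_mk, Prod.mk_sub_mk,
    momentSucc_eq, Nat.cast_add] at hp
  rw [if_neg] at hp
  · obtain ⟨n, hn, hcases⟩ := hp
    obtain rfl : n = degree X.R.a + degree X.L.a := by omega
    exact hcases
  · intro hc
    have hne' : (X.R.lam.sum : ℤ) - X.L.lam.sum ≠ 0 := sub_ne_zero.2 (by exact_mod_cast hne)
    have hdeg' : ((degree X.R.a + degree X.L.a : ℕ) : ℤ) ≠ 0 := by exact_mod_cast hdeg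
    apply mul_ne_zero hne' hdeg'
    rw [Nat.cast_add]
    linear_combination -hc

theorem constraints : MVConstraints X.R X.L :=
  ⟨X.interlace_low, X.interlace_high, X.weight_eq.1, X.weight_eq.2, X.lam_cons⟩

end MVPolytope

/-- `IsCompanion S C` holds for the upper sequences of a polytope with sides `(k, ∅, S)` and
`(0, ∅, C)`, see `lower_zero_and_isCompanion`. -/
def IsCompanion (W S : ℕ →₀ ℕ) : Prop := Interlace W S ∧ momentSucc W = moment S

namespace MVConstraints

variable {R L : LusztigDatum} {a : ℕ} {W : ℕ →₀ ℕ}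

lemma degree_add_eq_of_momentSucc_eq (h : MVConstraints R L) (hRa : R.a = single 0 a)
    (hRlam : R.lam = 0) (hW : IsCompanion W R.A) (hA : momentSucc L.A = moment R.A) :
    degree L.a + a = degree W + degree R.A := by
  have hLA : L.A = W := h.high.eq_of_momentSucc_eq hW.1 (hA.trans hW.2.symm)
  have h1 := h.weight_fst
  have h2 := h.weight_snd
  rw [hRa, hRlam, hLA] at h1 h2
  simp only [moment_single_zero, momentSucc_single_zero, Multiset.sum_zero] at h1 h2
  have := momentSucc_eq L.a
  have := momentSucc_eq W
  have := momentSucc_eq R.A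
  have := hW.2
  omega

lemma eq_zero_or_degree_add_eq (h : MVConstraints R L) (hRa : R.a = single 0 a)
    (hRlam : R.lam = 0) (hW : IsCompanion W R.A) :
    L.a = 0 ∨ degree L.a + a = degree W + degree R.A := by
  have hlow : Interlace L.a (single 0 a) := hRa ▸ h.low
  refine hlow.eq_zero_or_moment_eq.imp_right fun hmom =>
    h.degree_add_eq_of_momentSucc_eq hRa hRlam hW ?_
  have h2 := h.weight_snd
  have hle := h.high.moment_le_momentSucc
  rw [hRa, hRlam, hmom, momentSucc_single_zero, Multiset.sum_zero] at h2
  omega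

lemma lower_zero_and_isCompanion (h : MVConstraints R L) (hRa : R.a = single 0 a)
    (hRlam : R.lam = 0) (hW : IsCompanion W R.A) (hlt : degree W + degree R.A < a) :
    L.a = 0 ∧ L.lam = 0 ∧ IsCompanion R.A L.A ∧ degree R.A + degree L.A = a := by
  have hLa : L.a = 0 := (h.eq_zero_or_degree_add_eq hRa hRlam hW).resolve_right (by omega)
  have h1 := h.weight_fst
  have h2 := h.weight_snd
  rw [hRa, hRlam, hLa] at h1 h2
  simp only [moment_single_zero, momentSucc_single_zero, moment_zero, momentSucc_zero,
    Multiset.sum_zero] at h1 h2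
  have hlam : L.lam.sum = 0 := by
    by_contra hΛ
    have hcons := h.lam_cons (by rw [hRlam, Multiset.sum_zero]; exact Ne.symm hΛ)
      (by rw [hRa, hLa, degree_single, map_zero]; omega)
    rw [hRa, hLa, hRlam, degree_single, map_zero, add_zero] at hcons
    rcases hcons with hc | hc
    · exact Multiset.cons_ne_zero hc.symm
    · have hsum : L.lam.sum = a := by simp [hc]
      have := h.degree_add_eq_of_momentSucc_eq hRa hRlam hW (by omega)
      rw [hLa, map_zero] at this
      omega
  refine ⟨hLa, L.lam_eq_zero_of_sum_eq_zero hlam, ⟨h.high.symm, by omega⟩, ?_⟩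
  have := momentSucc_eq R.A
  have := momentSucc_eq L.A
  omega

end MVConstraints

namespace MVPolytope

def side (X : MVPolytope) (i : ZMod 2) : LusztigDatum := if i = 1 then X.R else X.L

@[simp] lemma side_one (X : MVPolytope) : X.side 1 = X.R := if_pos rfl

lemma constraints_side (X : MVPolytope) (i : ZMod 2) :
    MVConstraints (X.side i) (X.side (i + 1)) := by
  fin_cases i
  · exact X.constraints.symm
  · exact X.constraints

end MVPolytope

lemma mvf_iff {i : ZMod 2} {n : ℕ} {P Q : MVPolytope} :
    MVf i n P Q ↔ (Q.side i).a = (P.side i).a + single 0 n ∧ (Q.side i).lam = (P.side i).lam ∧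
      (Q.side i).A = (P.side i).A := by
  unfold MVf MVPolytope.side
  split_ifs <;> rfl

/-- The state, along a chain of `f_i`'s, of the side on which the next `f_i^b` acts. -/
def IsQuiet (d : LusztigDatum) (b : ℕ) : Prop :=
  d.a = 0 ∧ d.lam = 0 ∧ ∃ W, IsCompanion W d.A ∧ degree W + degree d.A < b

lemma isQuiet_side_of_isTrivialMV {X : MVPolytope} (hX : IsTrivialMV X) (i : ZMod 2) {b : ℕ}
    (hb : 0 < b) : IsQuiet (X.side i) b := by
  obtain ⟨hRa, hRlam, hRA, hLa, hLlam, hLA⟩ := hX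
  have hcomp : IsCompanion 0 0 := ⟨fun k => by simp [partialMoment, partialMomentSucc], rfl⟩
  unfold MVPolytope.side
  split_ifs
  · exact ⟨hRa, hRlam, 0, hRA ▸ hcomp, by simpa [hRA] using hb⟩
  · exact ⟨hLa, hLlam, 0, hLA ▸ hcomp, by simpa [hLA] using hb⟩

namespace IsQuiet

variable {P Q : MVPolytope} {i : ZMod 2} {b : ℕ}

lemma mvf_side (hP : IsQuiet (P.side i) b) (hf : MVf i b P Q) :
    (Q.side i).a = single 0 b ∧ (Q.side i).lam = 0 ∧
      ∃ W, IsCompanion W (Q.side i).A ∧ degree W + degree (Q.side i).A < b := by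
  obtain ⟨ha, hlam, hW⟩ := hP
  obtain ⟨ha', hlam', hA'⟩ := mvf_iff.1 hf
  exact ⟨by rw [ha', ha, zero_add], by rw [hlam', hlam], by rwa [hA']⟩

lemma mvf_side_add_one (hP : IsQuiet (P.side i) b) (hf : MVf i b P Q) {c : ℕ} (hbc : b < c) :
    IsQuiet (Q.side (i + 1)) c := by
  obtain ⟨ha, hlam, W, hW, hlt⟩ := hP.mvf_side hf
  obtain ⟨ha', hlam', hC, hdeg⟩ :=
    (Q.constraints_side i).lower_zero_and_isCompanion ha hlam hW hlt
  exact ⟨ha', hlam', _, hC, by omega⟩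

end IsQuiet

lemma isQuiet_chain {t : ℕ} {k : ℕ → ℕ} {i : ℕ → ZMod 2} {Q : ℕ → MVPolytope}
    (hk : ∀ j, j + 1 < t → k (j + 1) < k j) (hkpos : ∀ j, j < t → 0 < k j)
    (hi : ∀ j, j + 1 < t → i (j + 1) = i j + 1) (htriv : IsTrivialMV (Q t))
    (hstep : ∀ j, j < t → MVf (i j) (k j) (Q (j + 1)) (Q j)) {m : ℕ} (hm : m < t) :
    IsQuiet ((Q (m + 1)).side (i m)) (k m) := by
  suffices H : ∀ d m, m + d + 1 = t → IsQuiet ((Q (m + 1)).side (i m)) (k m) from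
    H (t - m - 1) m (by omega)
  intro d
  induction d with
  | zero =>
    rintro m rfl
    exact isQuiet_side_of_isTrivialMV htriv _ (hkpos m (by omega))
  | succ d ih =>
    intro m hm
    have h := (ih (m + 1) (by omega)).mvf_side_add_one (hstep (m + 1) (by omega)) (hk m (by omega))
    rwa [hi m (by omega), add_assoc, show (1 + 1 : ZMod 2) = 0 from rfl, add_zero] at h

theorem top_polytope_eOne_left_datum (P : MVPolytope) (t : ℕ) (ht : 0 < t)
    (k : ℕ → ℕ) (i : ℕ → ZMod 2)
    (hk : ∀ j, j + 1 < t → k (j + 1) < k j) (hkpos : ∀ j, j < t → 0 < k j)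
    (hi : ∀ j, j + 1 < t → i (j + 1) = i j + 1) (hi1 : i 0 = 1)
    (hchain : FWordChain t k i P) :
    P.R.a 0 = k 0 ∧
    ∀ K : ℕ, 1 ≤ K → K ≤ k 0 → ∀ P' : MVPolytope, MVf 1 K P' P → P'.L.a 0 < K := by
  obtain ⟨Q, htriv, rfl, hstep⟩ := hchain
  have hquiet := isQuiet_chain hk hkpos hi htriv hstep ht
  rw [hi1] at hquiet
  obtain ⟨hRa, hRlam, W, hW, hlt⟩ := hquiet.mvf_side (hi1 ▸ hstep 0 ht)
  rw [MVPolytope.side_one] at hRa hRlam hW hlt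
  refine ⟨by simp [hRa], fun K hK1 hKk P' hf => ?_⟩
  obtain ⟨ha, hlam, hA⟩ := mvf_iff.1 hf
  simp only [MVPolytope.side_one] at ha hlam hA
  have hP'a : P'.R.a = single 0 (k 0 - K) := by
    rw [single_tsub, ← hRa, ha, add_tsub_cancel_right]
  rw [hA] at hW hlt
  rcases P'.constraints.eq_zero_or_degree_add_eq hP'a (hlam ▸ hRlam) hW with h0 | hdeg
  · simp only [h0, Finsupp.coe_zero, Pi.zero_apply]
    omega
  · have := le_degree 0 P'.L.a
    omega

end MVPaper
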